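/- arXiv:2102.02692 — 10 statements merged into one kernel-verified Lean document; each statement's English description precedes it below -/
import Mathlib

section
/- In any mobi algebra, $p(\overline{a},\text{½},a)=\text{½}$ for all $a$, where $\overline{a}=p(1,a,0)$. -/
structure MobiAlgebra (A : Type*) where
  p : A → A → A → A
  zero : A
  half : A
  one : A
  A1 : p one half zero = half
  A2 : ∀ a, p zero a one = a
  A3 : ∀ a b, p a b a = a
  A4 : ∀ a b, p a zero b = a
  A5 : ∀ a b, p a one b = b
  A6 : ∀ a b₁ b₂, p a half b₁ = p a half b₂ → b₁ = b₂
  A7 : ∀ a b c₁ c₂ c₃, p a (p c₁ c₂ c₃) b = p (p a c₁ b) c₂ (p a c₃ b)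
  A8 : ∀ a₁ a₂ b₁ b₂ c,
    p (p a₁ c b₁) half (p a₂ c b₂) = p (p a₁ half a₂) c (p b₁ half b₂)

structure MobiSpace {A : Type*} (M : MobiAlgebra A) (X : Type*) where
  q : X → A → X → X
  X1 : ∀ x y, q x M.zero y = x
  X2 : ∀ x y, q x M.one y = y
  X3 : ∀ x a, q x a x = x
  X4 : ∀ x y₁ y₂, q x M.half y₁ = q x M.half y₂ → y₁ = y₂
  X5 : ∀ x y a b c, q (q x a y) b (q x c y) = q x (M.p a b c) y

theorem p_compl_half_self {A : Type*} (M : MobiAlgebra A) (a : A) :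
    M.p (M.p M.one a M.zero) M.half a = M.half :=
  calc M.p (M.p M.one a M.zero) M.half a
      = M.p (M.p M.one a M.zero) M.half (M.p M.zero a M.one) := by rw [M.A2]
    _ = M.p (M.p M.one M.half M.zero) a (M.p M.zero M.half M.one) := M.A8 _ _ _ _ _
    _ = M.half := by rw [M.A1, M.A2, M.A3]
end

section
/- In any mobi algebra, if $\overline{a}=a$ then $a=\text{½}$, where $\overline{a}=p(1,a,0)$. -/
namespace MobiAlgebra

variable {A : Type*} (M : MobiAlgebra A)

/-- Medial axiom (A8) at `a₁ = b₂ = 0`, `a₂ = b₁ = 1`: the right-hand side is `p ½ c ½ = ½`. -/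
theorem p_half_compl (a : A) : M.p a M.half (M.p M.one a M.zero) = M.half := by
  have medial := M.A8 M.zero M.one M.one M.zero a
  rwa [M.A2, M.A2, M.A1, M.A3] at medial

end MobiAlgebra

theorem compl_fixed_iff_half {A : Type*} (M : MobiAlgebra A) (a : A)
    (h : M.p M.one a M.zero = a) : a = M.half := by
  calc a = M.p a M.half a := (M.A3 a M.half).symm
    _ = M.p a M.half (M.p M.one a M.zero) := by rw [h]
    _ = M.half := M.p_half_compl a
end

section
/- In any mobi algebra, $\overline{a\circ b}=\overline{b}\cdot\overline{a}$, where $\overline{x}=p(1,x,0)$, $x\cdot y=p(0,x,y)$ and $x\circ y=p(x,y,1)$. -/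
namespace MobiAlgebra

variable {A : Type*} (M : MobiAlgebra A)

theorem compl_p (a b c : A) :
    M.p M.one (M.p a b c) M.zero = M.p (M.p M.one a M.zero) b (M.p M.one c M.zero) :=
  M.A7 _ _ _ _ _

theorem compl_one : M.p M.one M.one M.zero = M.zero :=
  M.A5 _ _

theorem compl_mul (b c : A) : M.p M.zero (M.p M.one b M.zero) c = M.p c b M.zero := by
  rw [M.A7, M.A5, M.A4]

end MobiAlgebra

theorem compl_circ {A : Type*} (M : MobiAlgebra A) (a b : A) :
    M.p M.one (M.p a b M.one) M.zero
      = M.p M.zero (M.p M.one b M.zero) (M.p M.one a M.zero) := by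
  -- both sides equal `p ā b 0`
  rw [M.compl_p, M.compl_one, M.compl_mul]
end

section
/- In any mobi algebra, $\text{½}\cdot p(a,b,c)=(\overline{b}\cdot a)\oplus(b\cdot c)$, where $\overline{x}=p(1,x,0)$, $x\cdot y=p(0,x,y)$, and $x\oplus y=p(x,\text{½},y)$. -/
/-!
Two applications of the medial law (A8), one in each direction, with the symmetry of `⊕` in
between: `½ · p(a,b,c) = p(0,b,0) ⊕ p(a,b,c) = p(½ · a, b, ½ · c) = p(a ⊕ 0, b, 0 ⊕ c)
= p(a,b,0) ⊕ (b · c)`, and `p(a,b,0) = b̄ · a` by distributivity (A7).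
-/

namespace MobiAlgebra

variable {A : Type*} (M : MobiAlgebra A)

/-- Expand `½ = p(1,½,0)` in the middle slot using (A7). -/
theorem p_half_comm (x y : A) : M.p x M.half y = M.p y M.half x := by
  conv_lhs => rw [← M.A1]
  rw [M.A7, M.A5, M.A4]

theorem p_zero_p_one_zero (a b : A) : M.p M.zero (M.p M.one b M.zero) a = M.p a b M.zero := by
  rw [M.A7, M.A5, M.A4]

end MobiAlgebra

theorem half_mul_p {A : Type*} (M : MobiAlgebra A) (a b c : A) :
    M.p M.zero M.half (M.p a b c)
      = M.p (M.p M.zero (M.p M.one b M.zero) a) M.half (M.p M.zero b c) := by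
  calc M.p M.zero M.half (M.p a b c)
      = M.p (M.p M.zero b M.zero) M.half (M.p a b c) := by rw [M.A3]
    _ = M.p (M.p M.zero M.half a) b (M.p M.zero M.half c) := M.A8 _ _ _ _ _
    _ = M.p (M.p a M.half M.zero) b (M.p M.zero M.half c) := by rw [M.p_half_comm M.zero a]
    _ = M.p (M.p a b M.zero) M.half (M.p M.zero b c) := (M.A8 _ _ _ _ _).symm
    _ = M.p (M.p M.zero (M.p M.one b M.zero) a) M.half (M.p M.zero b c) := by
      rw [M.p_zero_p_one_zero]
end

section
/- If $(A,p,0,\text{½},1)$ is a mobi algebra, then $(A,\oplus)$ with $x\oplus y=p(x,\text{½},y)$ is a midpoint algebra: $\oplus$ is idempotent, commutative, cancellative ($x\oplus y=x'\oplus y\Rightarrow x=x'$), and medial ($(x\oplus y)\oplus(z\oplus w)=(x\oplus z)\oplus(y\oplus w)$). -/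
namespace MobiAlgebra

variable {A : Type*} (M : MobiAlgebra A)

theorem p_half_right_cancel {x x' y : A} (h : M.p x M.half y = M.p x' M.half y) : x = x' :=
  M.A6 y x x' (by rw [M.p_half_comm y x, M.p_half_comm y x', h])

theorem p_half_medial (x y z w : A) :
    M.p (M.p x M.half y) M.half (M.p z M.half w)
      = M.p (M.p x M.half z) M.half (M.p y M.half w) :=
  M.A8 x z y w M.half

end MobiAlgebra

theorem mobi_midpoint {A : Type*} (M : MobiAlgebra A) :
    (∀ x, M.p x M.half x = x) ∧
    (∀ x y, M.p x M.half y = M.p y M.half x) ∧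
    (∀ x x' y, M.p x M.half y = M.p x' M.half y → x = x') ∧
    (∀ x y z w, M.p (M.p x M.half y) M.half (M.p z M.half w)
      = M.p (M.p x M.half z) M.half (M.p y M.half w)) :=
  ⟨fun x => M.A3 x M.half, M.p_half_comm, fun _ _ _ => M.p_half_right_cancel, M.p_half_medial⟩
end

section
/- Let $(X,q)$ be a mobi space over a mobi algebra $(A,p,0,\text{½},1)$. Then $q(y,a,x)=q(x,\overline{a},y)$ for all $x,y\in X$ and $a\in A$, where $\overline{a}=p(1,a,0)$. -/
theorem q_swap {A X : Type*} (M : MobiAlgebra A) (S : MobiSpace M X)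
    (x y : X) (a : A) :
    S.q y a x = S.q x (M.p M.one a M.zero) y :=
  calc S.q y a x = S.q (S.q x M.one y) a (S.q x M.zero y) := by rw [S.X2, S.X1]
    _ = S.q x (M.p M.one a M.zero) y := S.X5 x y M.one a M.zero
end

section
/- Let $(X,q)$ be a mobi space over a mobi algebra $(A,p,0,\text{½},1)$. Then $q(x,a,q(x,b,y))=q(x,a\cdot b,y)$, where $a\cdot b=p(0,a,b)$. -/
theorem q_mul {A X : Type*} (M : MobiAlgebra A) (S : MobiSpace M X)
    (x y : X) (a b : A) :
    S.q x a (S.q x b y) = S.q x (M.p M.zero a b) y := by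
  calc S.q x a (S.q x b y) = S.q (S.q x M.zero y) a (S.q x b y) := by rw [S.X1]
    _ = S.q x (M.p M.zero a b) y := S.X5 x y M.zero a b
end

section
/- Let $(X,q)$ be a mobi space over a mobi algebra $(A,p,0,\text{½},1)$. Then $q(q(x,a,y),b,y)=q(x,a\circ b,y)$, where $a\circ b=p(a,b,1)$. -/
theorem q_circ {A X : Type*} (M : MobiAlgebra A) (S : MobiSpace M X)
    (x y : X) (a b : A) :
    S.q (S.q x a y) b y = S.q x (M.p a b M.one) y := by
  rw [← S.X5, S.X2]
end

section
/- Let $(X,q)$ be a mobi space over a mobi algebra $A$. If $q(x,a,y)=q(x,b,y)$ then $q(x,p(a,t,b),y)=q(x,a,y)$ for all $t\in A$. -/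
theorem q_eq_interp {A X : Type*} (M : MobiAlgebra A) (S : MobiSpace M X)
    (x y : X) (a b : A) (h : S.q x a y = S.q x b y) :
    ∀ t : A, S.q x (M.p a t b) y = S.q x a y := by
  intro t
  calc S.q x (M.p a t b) y = S.q (S.q x a y) t (S.q x b y) := (S.X5 x y a t b).symm
    _ = S.q x a y := by rw [← h, S.X3]
end

section
/- Let $X=\mathbb{R}^+$ (positive reals) and $q(x,a,y)=x^{1-a}y^a$ for $a\in[0,1]$. Then $(X,q)$ is a mobi space over the canonical mobi algebra $([0,1],p,0,\tfrac12,1)$ with $p(a,b,c)=(1-b)a+bc$. -/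
def MobiSpace.transfer {A : Type*} {M : MobiAlgebra A} {X Y : Type*} (S : MobiSpace M X)
    (e : X ≃ Y) : MobiSpace M Y where
  q x a y := e (S.q (e.symm x) a (e.symm y))
  X1 x y := by simp [S.X1]
  X2 x y := by simp [S.X2]
  X3 x a := by simp [S.X3]
  X4 x y₁ y₂ h := e.symm.injective (S.X4 _ _ _ (e.injective h))
  X5 x y a b c := by simp [S.X5]

open unitInterval in
lemma unitInterval.convexComb_mem (a b c : I) : (1 - (b : ℝ)) * a + b * c ∈ I := by
  simpa only [smul_eq_mul] using
    convex_Icc (0 : ℝ) 1 a.2 c.2 (one_minus_nonneg b) (nonneg b) (sub_add_cancel 1 (b : ℝ))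

open unitInterval in
noncomputable def unitInterval.mobiAlgebra : MobiAlgebra I where
  p a b c := ⟨(1 - (b : ℝ)) * a + b * c, convexComb_mem a b c⟩
  zero := 0
  half := ⟨1 / 2, by norm_num⟩
  one := 1
  A1 := by ext; norm_num
  A2 a := by ext; push_cast; ring
  A3 a b := by ext; push_cast; ring
  A4 a b := by ext; push_cast; ring
  A5 a b := by ext; push_cast; ring
  A6 a b₁ b₂ h := by
    ext
    have h' := congrArg Subtype.val h
    push_cast at h'
    linarith
  A7 a b c₁ c₂ c₃ := by ext; push_cast; ring
  A8 a₁ a₂ b₁ b₂ c := by ext; push_cast; ring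

open AffineMap in
def lineMapMobiSpace (E : Type*) [AddCommGroup E] [Module ℝ E] :
    MobiSpace unitInterval.mobiAlgebra E where
  q x a y := lineMap x y (a : ℝ)
  X1 := lineMap_apply_zero
  X2 := lineMap_apply_one
  X3 x a := lineMap_same_apply x _
  X4 x y₁ y₂ h := by
    simp only [lineMap_apply_module] at h
    have h' : (1 / 2 : ℝ) • y₁ = (1 / 2 : ℝ) • y₂ := add_left_cancel h
    exact smul_right_injective E (by norm_num) h'
  X5 x y a b c := by
    simp only [lineMap_apply_module]
    change _ = (1 - ((1 - (b : ℝ)) * a + b * c)) • x + ((1 - (b : ℝ)) * a + b * c) • y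
    module

open Real in
noncomputable def Real.expEquivPos : ℝ ≃ {x : ℝ // 0 < x} where
  toFun t := ⟨exp t, exp_pos t⟩
  invFun x := log x
  left_inv := log_exp
  right_inv x := Subtype.ext (exp_log x.2)

open Real in
lemma Real.exp_lineMap_log {x y : ℝ} (hx : 0 < x) (hy : 0 < y) (a : ℝ) :
    exp (AffineMap.lineMap (log x) (log y) a) = x ^ (1 - a) * y ^ a := by
  rw [AffineMap.lineMap_apply_module, smul_eq_mul, smul_eq_mul, exp_add,
    rpow_def_of_pos hx, rpow_def_of_pos hy, mul_comm (1 - a), mul_comm a]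

theorem geometric_mean_mobi :
    ∃ M : MobiAlgebra (Set.Icc (0:ℝ) 1),
      ((M.zero : ℝ) = 0 ∧ (M.half : ℝ) = 1/2 ∧ (M.one : ℝ) = 1 ∧
        ∀ a b c, (M.p a b c : ℝ) = (1 - (b:ℝ)) * a + b * c) ∧
      ∃ S : MobiSpace M {x : ℝ // 0 < x},
        ∀ (x y : {x : ℝ // 0 < x}) (a : Set.Icc (0:ℝ) 1),
          (S.q x a y : ℝ) = (x : ℝ) ^ (1 - (a:ℝ)) * (y : ℝ) ^ (a:ℝ) := by
  refine ⟨unitInterval.mobiAlgebra, ⟨rfl, rfl, rfl, fun _ _ _ => rfl⟩,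
    (lineMapMobiSpace ℝ).transfer Real.expEquivPos,
    fun x y a => Real.exp_lineMap_log x.2 y.2 a⟩
end
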